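/- (VOC(φ_n)-greedy is myopically optimal: in MDPs, VOC with respect to the static value equals the expected decrease in the optimal Bayesian simple regret.) In the n-step MDP setting with a sub-σ-algebra 𝒢 ⊆ 𝓕, fix a state s. Define the prior optimal Bayesian simple regret BSR*(s; φ_n) := E[max_{a∈A_s} Υ_n(s,a)] − max_{a∈A_s} φ_n(s,a) and the posterior optimal Bayesian simple regret as the random variable BSR*_𝒢(s; φ_n) := E[max_{a∈A_s} Υ_n(s,a) | 𝒢] − max_{a∈A_s} φ_n^𝒢(s,a). Then VOC(𝒢; φ_n, s) := E[max_{a∈A_s} φ_n^𝒢(s,a)] − max_{a∈A_s} φ_n(s,a) satisfies VOC(𝒢; φ_n, s) = BSR*(s; φ_n) − E[BSR*_𝒢(s; φ_n)]. Consequently, among any family of sub-σ-algebras, one that maximizes VOC(·; φ_n, s) minimizes the expected posterior optimal Bayesian simple regret at s. -/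

import Mathlib

open MeasureTheory

/-- Pointwise `n`-step backup of the random frontier values `Z`:
`Υ_0(s,a) = Z(s,a)` and
`Υ_{n+1}(s,a) = Σ_{s'} P(s,a,s')·(R(s,a,s') + γ·max_{a' ∈ A_{s'}} Υ_n(s',a'))`. -/
noncomputable def Upsilon {Ω S A : Type*} [Fintype S] (As : S → Finset A)
    (hAs : ∀ s, (As s).Nonempty) (P R : S → A → S → ℝ) (γ : ℝ)
    (Z : S → A → Ω → ℝ) : ℕ → S → A → Ω → ℝ
  | 0 => fun s a ω => Z s a ω
  | n + 1 => fun s a ω => ∑ s' : S, P s a s' *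
      (R s a s' + γ * (As s').sup' (hAs s') fun a' => Upsilon As hAs P R γ Z n s' a' ω)

/-- Deterministic `n`-step backup of a base value function: used for the static value `φ_n`
(base `(s,a) ↦ E[Z(s,a)]`) and, pointwise in `ω`, for the conditional static value `φ_n^𝒢`
(base `(s,a) ↦ E[Z(s,a)|𝒢](ω)`). -/
noncomputable def stepValue {S A : Type*} [Fintype S] (As : S → Finset A)
    (hAs : ∀ s, (As s).Nonempty) (P R : S → A → S → ℝ) (γ : ℝ)
    (base : S → A → ℝ) : ℕ → S → A → ℝ
  | 0 => base
  | n + 1 => fun s a => ∑ s' : S, P s a s' *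
      (R s a s' + γ * (As s').sup' (hAs s') fun a' => stepValue As hAs P R γ base n s' a')


/-! The identity is the tower property `E[E[max_a Υ_n(s,a) | 𝒢]] = E[max_a Υ_n(s,a)]`: the
expected posterior regret is `E[max_a Υ_n(s,a)] − E[max_a φ_n^𝒢(s,a)]`, and subtracting it from
the prior regret leaves exactly the VOC. The one analytic input is that `max_a φ_n^𝒢(s,a)` is
integrable: conditional expectations are, and the backup only takes finite sums, scalings and
finite maxima of them. -/

theorem MeasureTheory.Integrable.finset_sup' {Ω ι β : Type*} {mΩ : MeasurableSpace Ω}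
    {μ : Measure Ω} [NormedAddCommGroup β] [Lattice β] [HasSolidNorm β] [IsOrderedAddMonoid β]
    {t : Finset ι} (ht : t.Nonempty) {f : ι → Ω → β} (hf : ∀ i ∈ t, Integrable (f i) μ) :
    Integrable (fun ω => t.sup' ht fun i => f i ω) μ := by
  simpa only [← Finset.sup'_apply] using
    Finset.sup'_induction ht f (p := fun g => Integrable g μ) (fun _ hg _ hh => hg.sup hh) hf

theorem integrable_stepValue {Ω S A : Type*} {mΩ : MeasurableSpace Ω} {μ : Measure Ω}
    [IsFiniteMeasure μ] [Fintype S] (As : S → Finset A) (hAs : ∀ s, (As s).Nonempty)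
    (P R : S → A → S → ℝ) (γ : ℝ) {W : S → A → Ω → ℝ} (hW : ∀ s a, Integrable (W s a) μ)
    (n : ℕ) (s : S) (a : A) :
    Integrable (fun ω => stepValue As hAs P R γ (fun s' a' => W s' a' ω) n s a) μ := by
  induction n generalizing s a with
  | zero => exact hW s a
  | succ n ih =>
    refine integrable_finsetSum _ fun s' _ => ?_
    exact ((integrable_const _).add
      ((Integrable.finset_sup' (hAs s') fun a' _ => ih s' a').const_mul γ)).const_mul _

theorem integral_condExp_sub {Ω : Type*} {m mΩ : MeasurableSpace Ω} {μ : Measure Ω}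
    (hm : m ≤ mΩ) [SigmaFinite (μ.trim hm)] (X : Ω → ℝ) {Y : Ω → ℝ} (hY : Integrable Y μ) :
    ∫ ω, ((μ[X|m]) ω - Y ω) ∂μ = ∫ ω, X ω ∂μ - ∫ ω, Y ω ∂μ := by
  rw [integral_sub integrable_condExp hY, integral_condExp hm]

theorem voc_stmt19_general {Ω S A : Type*} {mΩ : MeasurableSpace Ω} (μ : Measure Ω)
    [IsProbabilityMeasure μ] [Fintype S]
    (As : S → Finset A) (hAs : ∀ s, (As s).Nonempty) (P R : S → A → S → ℝ)
    (γ : ℝ) (Z : S → A → Ω → ℝ)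
    (n : ℕ) (s : S)
    (VOC : MeasurableSpace Ω → ℝ)
    (hVOC : ∀ m, VOC m =
      (∫ ω, (As s).sup' (hAs s)
          (fun a => stepValue As hAs P R γ (fun s' a' => (μ[Z s' a'|m]) ω) n s a) ∂μ) -
        (As s).sup' (hAs s)
          (fun a => stepValue As hAs P R γ (fun s' a' => ∫ ω, Z s' a' ω ∂μ) n s a))
    (BSRpost : MeasurableSpace Ω → Ω → ℝ)
    (hBSRpost : ∀ m ω, BSRpost m ω =
      (μ[fun ω' => (As s).sup' (hAs s) fun a => Upsilon As hAs P R γ Z n s a ω'|m]) ω -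
        (As s).sup' (hAs s)
          (fun a => stepValue As hAs P R γ (fun s' a' => (μ[Z s' a'|m]) ω) n s a))
    (m : MeasurableSpace Ω) (hm : m ≤ mΩ) :
    VOC m =
      ((∫ ω, (As s).sup' (hAs s) (fun a => Upsilon As hAs P R γ Z n s a ω) ∂μ) -
        (As s).sup' (hAs s)
          (fun a => stepValue As hAs P R γ (fun s' a' => ∫ ω, Z s' a' ω ∂μ) n s a)) -
      ∫ ω, BSRpost m ω ∂μ ∧
    ∀ m' : MeasurableSpace Ω, m' ≤ mΩ → VOC m' ≤ VOC m →
      ∫ ω, BSRpost m ω ∂μ ≤ ∫ ω, BSRpost m' ω ∂μ := by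
  have voc_eq : ∀ m', m' ≤ mΩ → VOC m' =
      ((∫ ω, (As s).sup' (hAs s) (fun a => Upsilon As hAs P R γ Z n s a ω) ∂μ) -
        (As s).sup' (hAs s)
          (fun a => stepValue As hAs P R γ (fun s' a' => ∫ ω, Z s' a' ω ∂μ) n s a)) -
      ∫ ω, BSRpost m' ω ∂μ := by
    intro m' hm'
    have posterior_value_integrable : Integrable (fun ω => (As s).sup' (hAs s) fun a =>
        stepValue As hAs P R γ (fun s' a' => (μ[Z s' a'|m']) ω) n s a) μ :=
      Integrable.finset_sup' (hAs s) fun a _ =>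
        integrable_stepValue As hAs P R γ (fun _ _ => integrable_condExp) n s a
    rw [hVOC, integral_congr_ae (.of_forall (hBSRpost m')),
      integral_condExp_sub hm' _ posterior_value_integrable]
    ring
  exact ⟨voc_eq m hm, fun m' hm' hle => by linarith [voc_eq m hm, voc_eq m' hm']⟩

/-- VOC(φ_n)-greedy is myopically optimal: with prior optimal Bayesian simple
regret `BSR*(s; φ_n) = E[max_{a ∈ A_s} Υ_n(s,a)] − max_{a ∈ A_s} φ_n(s,a)` and posterior
optimal Bayesian simple regret
`BSR*_𝒢(s; φ_n)(ω) = E[max_{a ∈ A_s} Υ_n(s,a) | 𝒢](ω) − max_{a ∈ A_s} φ_n^𝒢(s,a)(ω)`,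
the value of computation `VOC(𝒢; φ_n, s) = E[max_{a ∈ A_s} φ_n^𝒢(s,a)] − max_{a ∈ A_s} φ_n(s,a)`
equals `BSR*(s; φ_n) − E[BSR*_𝒢(s; φ_n)]`; consequently a sub-σ-algebra with larger VOC has
smaller expected posterior optimal Bayesian simple regret at `s`. -/
theorem voc_stmt19 {Ω S A : Type*} {mΩ : MeasurableSpace Ω} (μ : Measure Ω)
    [IsProbabilityMeasure μ] [Fintype S] [Nonempty S] [Fintype A] [Nonempty A]
    (As : S → Finset A) (hAs : ∀ s, (As s).Nonempty) (P R : S → A → S → ℝ)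
    (hP : ∀ s a s', 0 ≤ P s a s') (hPsum : ∀ s a, ∑ s', P s a s' = 1)
    (γ : ℝ) (hγ : 0 ≤ γ) (Z : S → A → Ω → ℝ) (hZ : ∀ s a, Integrable (Z s a) μ)
    (n : ℕ) (s : S)
    (VOC : MeasurableSpace Ω → ℝ)
    (hVOC : ∀ m, VOC m =
      (∫ ω, (As s).sup' (hAs s)
          (fun a => stepValue As hAs P R γ (fun s' a' => (μ[Z s' a'|m]) ω) n s a) ∂μ) -
        (As s).sup' (hAs s)
          (fun a => stepValue As hAs P R γ (fun s' a' => ∫ ω, Z s' a' ω ∂μ) n s a))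
    (BSRpost : MeasurableSpace Ω → Ω → ℝ)
    (hBSRpost : ∀ m ω, BSRpost m ω =
      (μ[fun ω' => (As s).sup' (hAs s) fun a => Upsilon As hAs P R γ Z n s a ω'|m]) ω -
        (As s).sup' (hAs s)
          (fun a => stepValue As hAs P R γ (fun s' a' => (μ[Z s' a'|m]) ω) n s a))
    (m : MeasurableSpace Ω) (hm : m ≤ mΩ) :
    VOC m =
      ((∫ ω, (As s).sup' (hAs s) (fun a => Upsilon As hAs P R γ Z n s a ω) ∂μ) -
        (As s).sup' (hAs s)
          (fun a => stepValue As hAs P R γ (fun s' a' => ∫ ω, Z s' a' ω ∂μ) n s a)) -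
      ∫ ω, BSRpost m ω ∂μ ∧
    ∀ m' : MeasurableSpace Ω, m' ≤ mΩ → VOC m' ≤ VOC m →
      ∫ ω, BSRpost m ω ∂μ ≤ ∫ ω, BSRpost m' ω ∂μ :=
  voc_stmt19_general μ As hAs P R γ Z n s VOC hVOC BSRpost hBSRpost m hm
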